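/- Let z, g ∈ ℂ with |z| < 1, and let r ≥ 0 be real with r·|g| < 1. Then the hyperbolic distance traveled by the stepped point is d_𝔻(z, (−r·g + z)/(−r·g·conj(z) + 1)) = ln((1 + r·|g|)/(1 − r·|g|)). -/

import Mathlib

/-- Inverse hyperbolic tangent: `artanh x = (1/2)·ln((1 + x)/(1 − x))`. -/
noncomputable def artanh (x : ℝ) : ℝ := (1 / 2) * Real.log ((1 + x) / (1 - x))

/-- Hyperbolic distance in the Poincaré disk:
`d_𝔻(z, w) = 2·artanh(|z − w| / |1 − z·conj(w)|)`. -/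
noncomputable def hypDist (z w : ℂ) : ℝ :=
  2 * artanh (‖z - w‖ / ‖1 - z * (starRingEnd ℂ) w‖)

/-!
With `a = −r·g` and `D = a·conj z + 1`, one computes `z − z′ = −a(1 − |z|²)/D` and
`1 − z·conj z′ = (1 − |z|²)/conj D`. Since `|D| = |conj D|`, the pseudo-hyperbolic distance
`|z − z′| / |1 − z·conj z′|` is exactly `|a| = r·|g|`, independently of `z`, and
`2·artanh ρ = ln((1 + ρ)/(1 − ρ))`.
-/

open ComplexConjugate

noncomputable def pseudoHypDist (z w : ℂ) : ℝ :=
  ‖z - w‖ / ‖1 - z * conj w‖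

noncomputable def descentStep (a z : ℂ) : ℂ :=
  (a + z) / (a * conj z + 1)

theorem two_mul_artanh (x : ℝ) : 2 * artanh x = Real.log ((1 + x) / (1 - x)) := by
  rw [artanh]
  ring

theorem hypDist_eq_log_pseudoHypDist (z w : ℂ) :
    hypDist z w = Real.log ((1 + pseudoHypDist z w) / (1 - pseudoHypDist z w)) :=
  two_mul_artanh _

namespace Complex

theorem mul_conj_add_one_ne_zero {a z : ℂ} (h : ‖a‖ * ‖z‖ < 1) : a * conj z + 1 ≠ 0 := by
  intro h0
  have h1 : ‖a * conj z‖ = 1 := by rw [eq_neg_of_add_eq_zero_left h0, norm_neg, norm_one]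
  rw [norm_mul, norm_conj] at h1
  linarith

theorem one_sub_mul_conj_self_ne_zero {z : ℂ} (hz : ‖z‖ ≠ 1) : 1 - z * conj z ≠ 0 := by
  rw [mul_conj, ← ofReal_one, ← ofReal_sub, ofReal_ne_zero, normSq_eq_norm_sq, sub_ne_zero]
  contrapose! hz
  nlinarith [norm_nonneg z]

end Complex

open Complex

theorem sub_descentStep {a z : ℂ} (hD : a * conj z + 1 ≠ 0) :
    z - descentStep a z = -a * (1 - z * conj z) / (a * conj z + 1) := by
  rw [descentStep]
  field_simp
  ring

theorem one_sub_mul_conj_descentStep {a z : ℂ} (hD : a * conj z + 1 ≠ 0) :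
    1 - z * conj (descentStep a z) = (1 - z * conj z) / conj (a * conj z + 1) := by
  have hD' : conj (a * conj z + 1) ≠ 0 := (map_ne_zero _).mpr hD
  rw [descentStep, map_div₀]
  field_simp
  simp only [map_add, map_mul, conj_conj, map_one]
  ring

theorem pseudoHypDist_descentStep {a z : ℂ} (hz : ‖z‖ ≠ 1) (hD : a * conj z + 1 ≠ 0) :
    pseudoHypDist z (descentStep a z) = ‖a‖ := by
  have hw : ‖1 - z * conj z‖ ≠ 0 := norm_ne_zero_iff.mpr (one_sub_mul_conj_self_ne_zero hz)
  have hD' : ‖a * conj z + 1‖ ≠ 0 := norm_ne_zero_iff.mpr hD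
  rw [pseudoHypDist, sub_descentStep hD, one_sub_mul_conj_descentStep hD,
    norm_div, norm_div, norm_mul, norm_neg, norm_conj, mul_div_assoc,
    mul_div_cancel_right₀ _ (div_ne_zero hw hD')]

/-- The hyperbolic distance traveled by a descent step with step-size parameter `r`
is `d_𝔻(z, z′) = ln((1 + r·|g|)/(1 − r·|g|))`. -/
theorem descent_step_distance (z g : ℂ) (hz : ‖z‖ < 1)
    (r : ℝ) (hr0 : 0 ≤ r) (hrg : r * ‖g‖ < 1) :
    hypDist z ((-(r : ℂ) * g + z) / (-(r : ℂ) * g * (starRingEnd ℂ) z + 1)) =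
      Real.log ((1 + r * ‖g‖) / (1 - r * ‖g‖)) := by
  have hstep : ‖-(r : ℂ) * g‖ = r * ‖g‖ := by
    rw [norm_mul, norm_neg, norm_real, Real.norm_of_nonneg hr0]
  have hD : -(r : ℂ) * g * conj z + 1 ≠ 0 := by
    refine mul_conj_add_one_ne_zero ?_
    rw [hstep]
    nlinarith [norm_nonneg z, mul_nonneg hr0 (norm_nonneg g)]
  rw [hypDist_eq_log_pseudoHypDist, ← descentStep, pseudoHypDist_descentStep hz.ne hD, hstep]
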